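/- Let φ ⊆ States be such that Init ⊆ φ, φ ∩ Bad = ∅. For the maximal system (Init, δ_φ, Bad), a clause c (set of literals) satisfies [Init ⊆ ⟦c⟧ and every state reachable from Init in one δ_φ-step satisfies c] if and only if φ ⊆ ⟦c⟧ (c is a consequence of φ). -/
import Mathlib


/-- States are valuations of the finite vocabulary `V`. -/
abbrev State (V : Type) := V → Bool

/-- Satisfaction of a clause (a finite set of literals; a literal is a variable
with a polarity, `true` = positive). -/
def satClause {V : Type} (σ : State V) (c : Finset (V × Bool)) : Prop :=
  ∃ l ∈ c, σ l.1 = l.2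

/-- The maximal transition relation w.r.t. `φ`. -/
def maxRel {V : Type} (φ : Set (State V)) : Set (State V × State V) :=
  {p | p.1 ∈ φ → p.2 ∈ φ}

/-- For the maximal system `(Init, maxRel φ, Bad)`: a clause `c` holds on `Init`
and on every one-step successor of `Init` iff `c` is a consequence of `φ`. -/
theorem one_step_check_iff_consequence {V : Type} [Fintype V]
    (Init Bad φ : Set (State V)) (hInit : Init.Nonempty)
    (h1 : Init ⊆ φ) (h2 : φ ∩ Bad = ∅) (c : Finset (V × Bool)) :
    ((∀ σ ∈ Init, satClause σ c) ∧
        ∀ σ σ', σ ∈ Init → (σ, σ') ∈ maxRel φ → satClause σ' c) ↔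
      ∀ σ ∈ φ, satClause σ c := by
  constructor
  · rintro ⟨_, hs⟩ σ hσ
    obtain ⟨σ0, h0⟩ := hInit
    exact hs σ0 σ h0 (fun _ => hσ)
  · intro h
    refine ⟨fun σ hσ => h σ (h1 hσ), fun σ σ' hσ hrel => h σ' (hrel (h1 hσ))⟩
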